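/- arXiv:1307.8341 — 2 statements merged into one kernel-verified Lean document; each statement's English description precedes it below -/
import Mathlib

section
/- Let S ⊆ ℝ × [0,∞) be a curtain defined by polynomials g₁,…,g_k as above, none divisible by (x−r) for any r > c, where c ∈ ℝ. Define f(x,y) = (x, y(1 + (c−x)·g₁(x,y)⋯g_k(x,y))²). Then f(S_r) = S_r for r ∈ π(S) with r ≤ c, and f(S_r) = {r} × [0,∞) for r ∈ π(S) with r > c. -/
open MvPolynomial in
lemma aux_dvd (p : MvPolynomial (Fin 2) ℝ) (r : ℝ)
    (h : ∀ y : ℝ, MvPolynomial.eval ![r, y] p = 0) :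
    (MvPolynomial.X 0 - MvPolynomial.C r) ∣ p := by
  set e := finSuccEquiv ℝ 1 with he
  have hC : e.symm (Polynomial.C (C r)) = MvPolynomial.C r := by
    have := finSuccEquiv_comp_C_eq_C (R := ℝ) 1
    exact congrFun (congrArg (fun f : _ →+* _ => (f : ℝ → _)) this) r
  have key : Polynomial.eval (C r) (e p) = 0 := by
    apply MvPolynomial.funext (R := ℝ)
    intro x
    have hx : x = ![x 0] := funext fun i => by fin_cases i; rfl
    have h1 : eval x (Polynomial.eval (C r) (e p))
        = Polynomial.eval r (Polynomial.map (eval x) (e p)) := by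
      rw [show Polynomial.eval (C r) (e p) = Polynomial.eval₂ (RingHom.id _) (C r) (e p) from rfl,
        Polynomial.hom_eval₂, Polynomial.eval_map]
      simp [Polynomial.eval₂]
    rw [h1, map_zero]
    have h2 := eval_eq_eval_mv_eval' (n := 1) ![x 0] r p
    have h3 : (Fin.cons r ![x 0] : Fin 2 → ℝ) = ![r, x 0] := by
      funext i; fin_cases i <;> rfl
    rw [hx, ← h2, h3, h (x 0)]
  have hdvd : (Polynomial.X - Polynomial.C (C r)) ∣ e p :=
    Polynomial.dvd_iff_isRoot.2 key
  have h4 : e.symm (Polynomial.X - Polynomial.C (C r)) ∣ e.symm (e p) := map_dvd _ hdvd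
  have h5 : e.symm Polynomial.X = MvPolynomial.X 0 := by
    rw [← finSuccEquiv_X_zero (R := ℝ) (n := 1), ← he]
    exact e.symm_apply_apply _
  rwa [map_sub, h5, hC, e.symm_apply_apply] at h4

lemma aux_eval (p : MvPolynomial (Fin 2) ℝ) (r y : ℝ) :
    Polynomial.eval y (MvPolynomial.aeval ![Polynomial.C r, Polynomial.X] p)
      = MvPolynomial.eval ![r, y] p := by
  induction p using MvPolynomial.induction_on with
  | C a => simp
  | add p q hp hq => simp [hp, hq]
  | mul_X p i hp => fin_cases i <;> simp [hp]

lemma aux_cont (p : MvPolynomial (Fin 2) ℝ) (r : ℝ) :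
    Continuous fun y => MvPolynomial.eval ![r, y] p := by
  have h : (fun y => MvPolynomial.eval ![r, y] p)
      = fun y => Polynomial.eval y (MvPolynomial.aeval ![Polynomial.C r, Polynomial.X] p) := by
    funext y; rw [aux_eval]
  rw [h]; exact Polynomial.continuous _

lemma img_Ici (φ : ℝ → ℝ) (s : ℝ) (hc : Continuous φ) (hφs : φ s = s)
    (hge : ∀ y, s ≤ y → y ≤ φ y) : φ '' Set.Ici s = Set.Ici s := by
  apply Set.Subset.antisymm
  · rintro _ ⟨y, hy, rfl⟩; exact le_trans hy (hge y hy)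
  · intro t ht
    have h1 : t ∈ Set.Icc (φ s) (φ t) := ⟨by rw [hφs]; exact ht, hge t ht⟩
    obtain ⟨y, hy, hyt⟩ := intermediate_value_Icc ht hc.continuousOn h1
    exact ⟨y, hy.1, hyt⟩

lemma img_Ioi (φ : ℝ → ℝ) (s : ℝ) (hc : Continuous φ) (hφs : φ s = s)
    (hge : ∀ y, s < y → y ≤ φ y) : φ '' Set.Ioi s = Set.Ioi s := by
  apply Set.Subset.antisymm
  · rintro _ ⟨y, hy, rfl⟩; exact lt_of_lt_of_le hy (hge y hy)
  · intro t ht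
    have h1 : t ∈ Set.Ioc (φ s) (φ t) := ⟨by rw [hφs]; exact ht, hge t ht⟩
    obtain ⟨y, hy, hyt⟩ := intermediate_value_Ioc ht.le hc.continuousOn h1
    exact ⟨y, hy.1, hyt⟩

lemma img_Ici_zero (φ : ℝ → ℝ) (s : ℝ) (A : Set ℝ) (hA : Set.Ioi s ⊆ A)
    (hnn : ∀ y ∈ A, 0 ≤ φ y) (hc : Continuous φ)
    (y₀ : ℝ) (hy₀ : s < y₀) (hz : φ y₀ = 0)
    (hbig : Filter.Tendsto φ Filter.atTop Filter.atTop) :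
    φ '' A = Set.Ici 0 := by
  apply Set.Subset.antisymm
  · rintro _ ⟨y, hy, rfl⟩; exact hnn y hy
  · intro t ht
    obtain ⟨y₂, hy₂⟩ := ((hbig.eventually_ge_atTop t).and (Filter.eventually_ge_atTop y₀)).exists
    have h1 : t ∈ Set.Icc (φ y₀) (φ y₂) := ⟨by rw [hz]; exact ht, hy₂.1⟩
    obtain ⟨y, hy, hyt⟩ := intermediate_value_Icc hy₂.2 hc.continuousOn h1
    exact ⟨y, hA (lt_of_lt_of_le hy₀ hy.1), hyt⟩

/-- The vertical fiber of a planar set over `r`. -/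
def fiber (S : Set (ℝ × ℝ)) (r : ℝ) : Set ℝ := {y | (r, y) ∈ S}

theorem stmt_6 (S : Set (ℝ × ℝ)) (hS : S ⊆ {p : ℝ × ℝ | 0 ≤ p.2})
    (k : ℕ) (g : Fin k → MvPolynomial (Fin 2) ℝ) (strict : Fin k → Bool)
    (hSdef : S = {p : ℝ × ℝ | ∀ i, if strict i then
        0 < MvPolynomial.eval ![p.1, p.2] (g i)
      else 0 ≤ MvPolynomial.eval ![p.1, p.2] (g i)})
    (hfib : ∀ r : ℝ, fiber S r = ∅ ∨
      ∃ s : ℝ, 0 ≤ s ∧ (fiber S r = Set.Ici s ∨ fiber S r = Set.Ioi s))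
    (hvanish : ∀ r s : ℝ, (fiber S r = Set.Ici s ∨ fiber S r = Set.Ioi s) →
      ∃ i, MvPolynomial.eval ![r, s] (g i) = 0)
    (c : ℝ)
    (hdiv : ∀ i, ∀ r : ℝ, c < r →
      ¬ (MvPolynomial.X 0 - MvPolynomial.C r ∣ g i))
    (f : ℝ × ℝ → ℝ × ℝ)
    (hf : f = fun p => (p.1, p.2 *
      (1 + (c - p.1) * MvPolynomial.eval ![p.1, p.2] (∏ i, g i)) ^ 2)) :
    (∀ r ∈ Prod.fst '' S, r ≤ c →
      f '' (S ∩ {p | p.1 = r}) = S ∩ {p | p.1 = r}) ∧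
    (∀ r ∈ Prod.fst '' S, c < r →
      f '' (S ∩ {p | p.1 = r}) = {r} ×ˢ Set.Ici (0 : ℝ)) := by
  subst hf
  set G : MvPolynomial (Fin 2) ℝ := ∏ i, g i with hG
  have hGnn : ∀ p : ℝ × ℝ, p ∈ S → 0 ≤ MvPolynomial.eval ![p.1, p.2] G := by
    intro p hp
    rw [hSdef] at hp
    rw [hG, map_prod]
    apply Finset.prod_nonneg
    intro i _
    have h := hp i
    cases hsi : strict i <;> rw [hsi] at h <;> simp at h <;> linarith
  have hsplit : ∀ r : ℝ, S ∩ {p | p.1 = r} = {r} ×ˢ fiber S r := by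
    intro r; ext ⟨a, b⟩
    simp only [Set.mem_inter_iff, Set.mem_setOf_eq, Set.mem_prod, Set.mem_singleton_iff, fiber]
    constructor
    · rintro ⟨h1, rfl⟩; exact ⟨rfl, h1⟩
    · rintro ⟨rfl, h1⟩; exact ⟨h1, rfl⟩
  have himg : ∀ (r : ℝ) (A : Set ℝ),
      (fun p : ℝ × ℝ => (p.1, p.2 * (1 + (c - p.1) * MvPolynomial.eval ![p.1, p.2] G) ^ 2)) ''
        ({r} ×ˢ A)
      = {r} ×ˢ ((fun y => y * (1 + (c - r) * MvPolynomial.eval ![r, y] G) ^ 2) '' A) := by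
    intro r A
    rw [Set.singleton_prod, Set.singleton_prod, Set.image_image, Set.image_image]
  -- common setup for a column r with nonempty fiber
  have hcommon : ∀ r : ℝ, r ∈ Prod.fst '' S →
      ∃ s : ℝ, 0 ≤ s ∧ (fiber S r = Set.Ici s ∨ fiber S r = Set.Ioi s) ∧
        MvPolynomial.eval ![r, s] G = 0 := by
    intro r hr
    obtain ⟨p, hpS, hpr⟩ := hr
    have hne : fiber S r ≠ ∅ := by
      have hmem : p.2 ∈ fiber S r := by
        show (r, p.2) ∈ S
        rw [← hpr]
        simpa using hpS
      intro h0; rw [h0] at hmem; exact hmem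
    obtain ⟨s, hs0, hcase⟩ := (hfib r).resolve_left hne
    obtain ⟨i, hi⟩ := hvanish r s hcase
    refine ⟨s, hs0, hcase, ?_⟩
    rw [hG, map_prod]
    exact Finset.prod_eq_zero (Finset.mem_univ i) hi
  constructor
  · -- case r ≤ c
    intro r hr hrc
    obtain ⟨s, hs0, hcase, hGs⟩ := hcommon r hr
    have hcont : Continuous
        (fun y => y * (1 + (c - r) * MvPolynomial.eval ![r, y] G) ^ 2) :=
      continuous_id.mul ((continuous_const.add (continuous_const.mul (aux_cont G r))).pow 2)
    have hφs : (fun y => y * (1 + (c - r) * MvPolynomial.eval ![r, y] G) ^ 2) s = s := by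
      simp [hGs]
    have hge0 : ∀ y, y ∈ fiber S r →
        y ≤ (fun y => y * (1 + (c - r) * MvPolynomial.eval ![r, y] G) ^ 2) y := by
      intro y hyf
      have hy0 : 0 ≤ y := hS hyf
      have hg0 : 0 ≤ MvPolynomial.eval ![r, y] G := hGnn (r, y) hyf
      have h1 : 0 ≤ (c - r) * MvPolynomial.eval ![r, y] G :=
        mul_nonneg (by linarith) hg0
      simp only
      nlinarith [mul_nonneg hy0 h1, mul_nonneg (mul_nonneg hy0 h1) h1]
    rw [hsplit r, himg r]
    rcases hcase with hcase | hcase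
    · rw [hcase, img_Ici _ s hcont hφs fun y hy => hge0 y (by rw [hcase]; exact hy)]
    · rw [hcase, img_Ioi _ s hcont hφs fun y hy => hge0 y (by rw [hcase]; exact hy)]
  · -- case c < r
    intro r hr hrc
    obtain ⟨s, hs0, hcase, hGs⟩ := hcommon r hr
    have hIoisub : Set.Ioi s ⊆ fiber S r := by
      rcases hcase with hcase | hcase
      · rw [hcase]; exact Set.Ioi_subset_Ici_self
      · rw [hcase]
    have hcont : Continuous
        (fun y => y * (1 + (c - r) * MvPolynomial.eval ![r, y] G) ^ 2) :=
      continuous_id.mul ((continuous_const.add (continuous_const.mul (aux_cont G r))).pow 2)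
    set q : Polynomial ℝ := MvPolynomial.aeval ![Polynomial.C r, Polynomial.X] G with hq
    have hqe : ∀ y, q.eval y = MvPolynomial.eval ![r, y] G := fun y => aux_eval G r y
    set B : Polynomial ℝ := 1 + Polynomial.C (c - r) * q with hB
    have hBe : ∀ y, B.eval y = 1 + (c - r) * MvPolynomial.eval ![r, y] G := by
      intro y; rw [hB]; simp [hqe y]
    have hφB : (fun y => y * (1 + (c - r) * MvPolynomial.eval ![r, y] G) ^ 2)
        = fun y => y * (B.eval y) ^ 2 := by
      funext y; rw [hBe y]
    have hq0 : q ≠ 0 := by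
      intro h0
      have hqprod : q = ∏ i, MvPolynomial.aeval ![Polynomial.C r, Polynomial.X] (g i) := by
        rw [hq, hG, map_prod]
      rw [hqprod] at h0
      obtain ⟨i, _, hi0⟩ := Finset.prod_eq_zero_iff.1 h0
      apply hdiv i r hrc
      apply aux_dvd
      intro y
      rw [← aux_eval, hi0, Polynomial.eval_zero]
    have hqs : q.eval s = 0 := by rw [hqe s, hGs]
    have hqd : 0 < q.degree := Polynomial.degree_pos_of_root hq0 hqs
    have habs := Polynomial.abs_tendsto_atTop q hqd
    have hcr : c - r ≠ 0 := by intro h; linarith [sub_eq_zero.1 h]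
    have hBd : 0 < B.degree := by
      have h1 : (Polynomial.C (c - r) * q).degree = q.degree := Polynomial.degree_C_mul hcr
      have h2 : (1 : Polynomial ℝ).degree < (Polynomial.C (c - r) * q).degree := by
        rw [h1, Polynomial.degree_one]; exact hqd
      rw [hB, Polynomial.degree_add_eq_right_of_degree_lt h2, h1]; exact hqd
    have hBabs := Polynomial.abs_tendsto_atTop B hBd
    have hbs : B.eval s = 1 := by rw [hBe s, hGs]; ring
    have hopen : {y : ℝ | 0 < B.eval y} ∈ nhds s :=
      (isOpen_lt continuous_const (Polynomial.continuous B)).mem_nhds (by simp [hbs])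
    have hev : ∀ᶠ y in nhdsWithin s (Set.Ioi s), 0 < B.eval y ∧ y ∈ Set.Ioi s :=
      (eventually_nhdsWithin_of_eventually_nhds hopen).and eventually_mem_nhdsWithin
    obtain ⟨y₁, hby₁, hy₁s⟩ := hev.exists
    have hrc' : 0 < r - c := by linarith
    obtain ⟨y₂, h1, h2⟩ :=
      ((habs.eventually_ge_atTop (1 / (r - c))).and (Filter.eventually_ge_atTop y₁)).exists
    have hy₂f : y₂ ∈ fiber S r := hIoisub (lt_of_lt_of_le hy₁s h2)
    have hq2 : 0 ≤ q.eval y₂ := by rw [hqe]; exact hGnn (r, y₂) hy₂f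
    have hb2 : B.eval y₂ ≤ 0 := by
      have habs2 : |q.eval y₂| = q.eval y₂ := abs_of_nonneg hq2
      have h3 : 1 / (r - c) ≤ q.eval y₂ := by rw [← habs2]; exact h1
      have h4 := (div_le_iff₀ hrc').1 h3
      rw [hBe y₂, ← hqe y₂]
      nlinarith
    obtain ⟨y₀, hy₀mem, hy₀⟩ :=
      intermediate_value_Icc' h2 (Polynomial.continuous B).continuousOn ⟨hb2, hby₁.le⟩
    have hφ0 : (fun y => y * (1 + (c - r) * MvPolynomial.eval ![r, y] G) ^ 2) y₀ = 0 := by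
      rw [hφB]; simp only; rw [show Polynomial.eval y₀ B = 0 from hy₀]; ring
    have hbig : Filter.Tendsto
        (fun y => y * (1 + (c - r) * MvPolynomial.eval ![r, y] G) ^ 2)
        Filter.atTop Filter.atTop := by
      rw [hφB]
      apply Filter.tendsto_atTop_mono' Filter.atTop _ Filter.tendsto_id
      filter_upwards [hBabs.eventually_ge_atTop 1, Filter.eventually_ge_atTop (0 : ℝ)]
        with y hy1 hy0
      have hsq : 1 ≤ (B.eval y) ^ 2 := by nlinarith [abs_nonneg (B.eval y), sq_abs (B.eval y)]
      show (id y : ℝ) ≤ y * (B.eval y) ^ 2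
      simp only [id]
      nlinarith
    have hnn : ∀ y ∈ fiber S r,
        0 ≤ (fun y => y * (1 + (c - r) * MvPolynomial.eval ![r, y] G) ^ 2) y := by
      intro y hyf
      exact mul_nonneg (hS hyf) (sq_nonneg _)
    rw [hsplit r, himg r,
      img_Ici_zero _ s (fiber S r) hIoisub hnn hcont y₀ (lt_of_lt_of_le hy₁s hy₀mem.1) hφ0 hbig]
end

section
/- Let P'' ⊆ {x ≤ 0, y ≥ 0} be an unbounded convex polygon with vertices p''₁, …, p''_{n−1} such that p''_{n−1} = (0,0), the edge p''_{n−2}p''_{n−1} lies in {y = 0} with p''_{n−2} = (a, 0), a < 0, and the unbounded edge from p''_{n−1} lies on {x = 0}. Let ℓ₁,…,ℓ_n be the one-degree defining polynomials of P'' with ℓ_{n−1} = y and ℓ_n = −x, and set ℓ = ℓ₁⋯ℓ_{n−1}. Then the polynomial map f(x,y) = (x, y(1 + ℓ(x,y)(a − x))²) satisfies f(P'' \ {(0,0)}) = P''. -/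
open MvPolynomial Filter Topology

private lemma stmt17_classify (d : Fin 2 →₀ ℕ) (h : d 0 + d 1 ≤ 1) :
    d = 0 ∨ d = Finsupp.single 0 1 ∨ d = Finsupp.single 1 1 := by
  have h0 : d 0 = 0 ∧ d 1 = 0 ∨ d 0 = 1 ∧ d 1 = 0 ∨ d 0 = 0 ∧ d 1 = 1 := by omega
  rcases h0 with ⟨h1,h2⟩|⟨h1,h2⟩|⟨h1,h2⟩
  · left; ext i; fin_cases i <;> simpa
  · right; left; ext i; fin_cases i <;> simp [h1, h2, Finsupp.single_apply]
  · right; right; ext i; fin_cases i <;> simp [h1, h2, Finsupp.single_apply]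

private lemma stmt17_s01 : (Finsupp.single (0 : Fin 2) 1 : Fin 2 →₀ ℕ) ≠ 0 := by
  simp [Finsupp.single_eq_zero]
private lemma stmt17_s11 : (Finsupp.single (1 : Fin 2) 1 : Fin 2 →₀ ℕ) ≠ 0 := by
  simp [Finsupp.single_eq_zero]
private lemma stmt17_sne :
    (Finsupp.single (0 : Fin 2) 1 : Fin 2 →₀ ℕ) ≠ Finsupp.single 1 1 := by
  intro h
  have := DFunLike.congr_fun h 0
  simp [Finsupp.single_apply] at this

private lemma stmt17_repr (p : MvPolynomial (Fin 2) ℝ) (hp : p.totalDegree ≤ 1) :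
    p = C (p.coeff 0) + C (p.coeff (Finsupp.single 0 1)) * X 0
        + C (p.coeff (Finsupp.single 1 1)) * X 1 := by
  ext d
  have hcl : d ∈ p.support → (d = 0 ∨ d = Finsupp.single 0 1 ∨ d = Finsupp.single 1 1) := by
    intro hd
    apply stmt17_classify
    have := MvPolynomial.le_totalDegree hd
    have h2 : d.sum (fun _ e => e) = d 0 + d 1 := by
      rw [Finsupp.sum_fintype]; · exact Fin.sum_univ_two d
      · intro; rfl
    omega
  simp only [coeff_add, coeff_C, coeff_C_mul, coeff_X']
  by_cases h0 : d = 0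
  · subst h0; simp [stmt17_s01.symm, stmt17_s11.symm, eq_comm]
  by_cases h1 : d = Finsupp.single 0 1
  · subst h1; simp [Ne.symm stmt17_s01, stmt17_sne, eq_comm]
  by_cases h2 : d = Finsupp.single 1 1
  · subst h2; simp [Ne.symm stmt17_s11, stmt17_sne, Ne.symm stmt17_sne, eq_comm]
  · have : d ∉ p.support := fun hd => by rcases hcl hd with h|h|h <;> tauto
    rw [MvPolynomial.notMem_support_iff.mp this]
    simp [Ne.symm h0, eq_comm, h1, h2]

private lemma stmt17_eval (p : MvPolynomial (Fin 2) ℝ) (hp : p.totalDegree ≤ 1) (x y : ℝ) :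
    MvPolynomial.eval ![x, y] p
      = p.coeff 0 + p.coeff (Finsupp.single 0 1) * x + p.coeff (Finsupp.single 1 1) * y := by
  conv_lhs => rw [stmt17_repr p hp]
  simp

private lemma stmt17_ray (P : Set (ℝ × ℝ)) (hclosed : IsClosed P) (hconv : Convex ℝ P)
    (hsub : P ⊆ {p : ℝ × ℝ | p.1 ≤ 0 ∧ 0 ≤ p.2})
    (haxis : ∀ y : ℝ, 0 ≤ y → ((0 : ℝ), y) ∈ P)
    (p : ℝ × ℝ) (hp : p ∈ P) (t : ℝ) (ht : 0 ≤ t) : (p.1, p.2 + t) ∈ P := by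
  have hp2 : 0 ≤ p.2 := (hsub hp).2
  set q : ℕ → ℝ × ℝ := fun n => ((1 - 1/(n+1 : ℝ)) * p.1, p.2 + t) with hq
  have hmem : ∀ n : ℕ, q n ∈ P := by
    intro n
    have hε : (0 : ℝ) < 1/(n+1 : ℝ) := by positivity
    have hε1 : 1/(n+1 : ℝ) ≤ 1 := by
      rw [div_le_one (by positivity)]; linarith [Nat.cast_nonneg (α := ℝ) n]
    have h2 : ((0 : ℝ), p.2 + t * (n+1 : ℝ)) ∈ P := by
      apply haxis; positivity
    have hmem' := hconv hp h2 (a := 1 - 1/(n+1:ℝ)) (b := 1/(n+1:ℝ)) (by linarith) (le_of_lt hε)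
      (by ring)
    have heq : (1 - 1/(n+1:ℝ)) • p + (1/(n+1:ℝ)) • ((0:ℝ), p.2 + t*(n+1:ℝ)) = q n := by
      have hne : (n+1:ℝ) ≠ 0 := by positivity
      simp only [hq, Prod.smul_mk, smul_eq_mul, Prod.ext_iff, Prod.fst_add, Prod.snd_add,
        Prod.smul_fst, Prod.smul_snd]
      constructor
      · ring
      · field_simp; ring
    rwa [heq] at hmem'
  have hlim : Tendsto q atTop (𝓝 (p.1, p.2 + t)) := by
    rw [Prod.tendsto_iff]
    constructor
    · have h1 : Tendsto (fun n : ℕ => 1/(n+1 : ℝ)) atTop (𝓝 0) :=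
        tendsto_one_div_add_atTop_nhds_zero_nat
      have h2 := (tendsto_const_nhds (x := (1:ℝ)) (f := atTop (α := ℕ))|>.sub h1).mul
        (tendsto_const_nhds (x := p.1))
      simpa [hq] using h2
    · exact tendsto_const_nhds
  exact hclosed.mem_of_tendsto hlim (Eventually.of_forall hmem)

theorem stmt_17 (a : ℝ) (ha : a < 0) (P : Set (ℝ × ℝ))
    (hclosed : IsClosed P) (hconv : Convex ℝ P)
    (hsub : P ⊆ {p : ℝ × ℝ | p.1 ≤ 0 ∧ 0 ≤ p.2})
    -- the bounded edge from (a,0) to (0,0) lies in {y = 0}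
    (hy : P ∩ {p : ℝ × ℝ | p.2 = 0} = Set.Icc a 0 ×ˢ ({0} : Set ℝ))
    -- the unbounded edge from (0,0) lies on {x = 0}
    (hx : P ∩ {p : ℝ × ℝ | p.1 = 0} = ({0} : Set ℝ) ×ˢ Set.Ici (0 : ℝ))
    (m : ℕ) (g : Fin m → MvPolynomial (Fin 2) ℝ)
    (hdeg : ∀ i, (g i).totalDegree = 1)
    -- ℓ_{n-1} = y is among the first n-1 defining polynomials
    (hyg : ∃ j, g j = MvPolynomial.X 1)
    -- P = {ℓ₁ ≥ 0, …, ℓ_{n-1} ≥ 0, -x ≥ 0}, with ℓ_n = -x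
    (hPdef : P = {p : ℝ × ℝ |
      (∀ i, 0 ≤ MvPolynomial.eval ![p.1, p.2] (g i)) ∧ 0 ≤ -p.1})
    -- none of ℓ₁, …, ℓ_{n-1} is divisible by x - r for r > a
    (hdiv : ∀ i, ∀ r : ℝ, a < r → ¬ (MvPolynomial.X 0 - MvPolynomial.C r ∣ g i))
    -- at each closed-fiber endpoint some defining polynomial vanishes
    (hvan : ∀ r s : ℝ, {y : ℝ | (r, y) ∈ P} = Set.Ici s →
      ∃ i, MvPolynomial.eval ![r, s] (g i) = 0) :
    (fun p : ℝ × ℝ => (p.1, p.2 *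
        (1 + MvPolynomial.eval ![p.1, p.2] (∏ i, g i) * (a - p.1)) ^ 2)) ''
      (P \ {((0 : ℝ), (0 : ℝ))}) = P := by
  classical
  -- affine coefficients of the gᵢ
  obtain ⟨Cc, A, B, hev, hrepr⟩ :
      ∃ Cc A B : Fin m → ℝ,
        (∀ i (x y : ℝ), MvPolynomial.eval ![x, y] (g i) = Cc i + A i * x + B i * y) ∧
        (∀ i, g i = MvPolynomial.C (Cc i) + MvPolynomial.C (A i) * MvPolynomial.X 0
            + MvPolynomial.C (B i) * MvPolynomial.X 1) := by
    refine ⟨fun i => (g i).coeff 0, fun i => (g i).coeff (Finsupp.single 0 1),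
      fun i => (g i).coeff (Finsupp.single 1 1),
      fun i x y => stmt17_eval (g i) (le_of_eq (hdeg i)) x y, fun i => ?_⟩
    conv_lhs => rw [stmt17_repr (g i) (le_of_eq (hdeg i))]
  -- the product function
  obtain ⟨L, hLdef⟩ : ∃ L : ℝ → ℝ → ℝ, ∀ x y, L x y = ∏ i, (Cc i + A i * x + B i * y) :=
    ⟨fun x y => ∏ i, (Cc i + A i * x + B i * y), fun _ _ => rfl⟩
  have hLev : ∀ x y : ℝ, MvPolynomial.eval ![x, y] (∏ i, g i) = L x y := by
    intro x y
    rw [map_prod, hLdef]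
    exact Finset.prod_congr rfl fun i _ => hev i x y
  have hcont : ∀ x : ℝ, Continuous (fun y => L x y) := by
    intro x
    have : (fun y => L x y) = fun y => ∏ i, (Cc i + A i * x + B i * y) := by
      funext y; exact hLdef x y
    rw [this]
    exact continuous_finset_prod _ fun i _ =>
      (continuous_const.add (continuous_const.mul continuous_id))
  have hmem : ∀ p : ℝ × ℝ, p ∈ P ↔ (∀ i, 0 ≤ Cc i + A i * p.1 + B i * p.2) ∧ p.1 ≤ 0 := by
    intro p
    rw [hPdef]
    simp only [Set.mem_setOf_eq, neg_nonneg]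
    constructor
    · rintro ⟨h1, h2⟩; exact ⟨fun i => by rw [← hev i p.1 p.2]; exact h1 i, h2⟩
    · rintro ⟨h1, h2⟩; exact ⟨fun i => by rw [hev i p.1 p.2]; exact h1 i, h2⟩
  have haxis : ∀ y : ℝ, 0 ≤ y → ((0 : ℝ), y) ∈ P := by
    intro y hy0
    have : ((0:ℝ), y) ∈ P ∩ {p : ℝ × ℝ | p.1 = 0} :=
      hx.ge (show _ ∈ ({0} : Set ℝ) ×ˢ Set.Ici (0:ℝ) from ⟨rfl, hy0⟩)
    exact this.1
  have hseg : ∀ x : ℝ, x ∈ Set.Icc a 0 → ((x : ℝ), (0 : ℝ)) ∈ P := by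
    intro x hxm
    have : (x, (0:ℝ)) ∈ P ∩ {p : ℝ × ℝ | p.2 = 0} :=
      hy.ge (show _ ∈ Set.Icc a 0 ×ˢ ({0} : Set ℝ) from ⟨hxm, rfl⟩)
    exact this.1
  have hray := stmt17_ray P hclosed hconv hsub haxis
  have h00 : ((0:ℝ), (0:ℝ)) ∈ P := hseg 0 ⟨le_of_lt ha, le_refl 0⟩
  -- B i ≥ 0
  have hBnn : ∀ i, 0 ≤ B i := by
    intro i
    by_contra hneg
    push_neg at hneg
    have hBne : -B i ≠ 0 := by intro h; rw [neg_eq_zero] at h; linarith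
    set y : ℝ := max 0 ((Cc i + 1)/(-B i)) with hyd
    have hy0 : 0 ≤ y := le_max_left _ _
    have h1 : 0 ≤ Cc i + A i * 0 + B i * y := ((hmem (0, y)).mp (haxis y hy0)).1 i
    have h2 : (Cc i + 1)/(-B i) ≤ y := le_max_right _ _
    have h3 : B i * y ≤ -(Cc i + 1) := by
      calc B i * y ≤ B i * ((Cc i + 1)/(-B i)) :=
              mul_le_mul_of_nonpos_left h2 (le_of_lt hneg)
        _ = -(Cc i + 1) := by
          have hB0 : B i ≠ 0 := ne_of_lt hneg
          rw [mul_div_left_comm, div_neg, div_self hB0]; ring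
    nlinarith
  -- factors with B i = 0 are positive when x > a
  have hconstpos : ∀ i, B i = 0 → ∀ x y : ℝ, a < x → 0 < Cc i + A i * x + B i * y := by
    intro i hBi x y hax
    have hAne : A i ≠ 0 := by
      intro hAi
      have hri := hrepr i
      rw [hAi, hBi] at hri
      simp only [map_zero, zero_mul, add_zero] at hri
      have hd := hdeg i
      rw [hri] at hd
      simp [MvPolynomial.totalDegree_C] at hd
    obtain ⟨r, hr⟩ : ∃ r : ℝ, r = -(Cc i) / A i := ⟨_, rfl⟩
    have hdvd : (MvPolynomial.X 0 - MvPolynomial.C r ∣ g i) := by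
      refine ⟨MvPolynomial.C (A i), ?_⟩
      have hri := hrepr i
      rw [hBi] at hri
      simp only [map_zero, zero_mul, add_zero] at hri
      rw [hri]
      have hrA : r * A i = -(Cc i) := by rw [hr]; field_simp
      rw [sub_mul, ← MvPolynomial.C_mul, hrA, map_neg]
      ring
    have hra : ¬ a < r := fun h => hdiv i r h hdvd
    push_neg at hra
    have hCnn : 0 ≤ Cc i := by
      have h0 := ((hmem (0, 0)).mp h00).1 i
      simp at h0
      linarith
    have hCr : Cc i = -(A i) * r := by rw [hr]; field_simp
    have hApos : 0 < A i := by
      rcases lt_trichotomy (A i) 0 with h|h|h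
      · exfalso; nlinarith
      · exact absurd h hAne
      · exact h
    have hrx : r < x := lt_of_le_of_lt hra hax
    rw [hCr, hBi]
    nlinarith
  -- fibers are closed upward rays
  have hfiber : ∀ r : ℝ, {y : ℝ | (r, y) ∈ P}.Nonempty →
      {y : ℝ | (r, y) ∈ P} = Set.Ici (sInf {y : ℝ | (r, y) ∈ P}) := by
    intro r hne
    set S := {y : ℝ | (r, y) ∈ P} with hS
    have hbdd : BddBelow S := ⟨0, fun y hyS => (hsub hyS).2⟩
    have hclS : IsClosed S := by
      have : S = (fun y : ℝ => (r, y)) ⁻¹' P := rfl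
      rw [this]
      exact hclosed.preimage (Continuous.prodMk continuous_const continuous_id)
    have hinf : sInf S ∈ S := hclS.csInf_mem hne hbdd
    ext y
    constructor
    · exact fun hyS => csInf_le hbdd hyS
    · intro hy'
      have := hray (r, sInf S) hinf (y - sInf S) (by simpa using hy')
      simpa [hS] using this
  -- nonnegativity of L on P
  have hLnn : ∀ x y : ℝ, (x, y) ∈ P → 0 ≤ L x y := by
    intro x y hp
    rw [hLdef]
    apply Finset.prod_nonneg
    intro i _
    exact ((hmem (x, y)).mp hp).1 i
  ext q
  constructor
  · -- image ⊆ P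
    rintro ⟨p, ⟨hpP, _⟩, rfl⟩
    simp only
    rw [hLev]
    have hp1 : p.1 ≤ 0 := (hsub hpP).1
    have hp2 : 0 ≤ p.2 := (hsub hpP).2
    rcases le_or_gt p.1 a with hle | hlt
    · have hL0 : 0 ≤ L p.1 p.2 := hLnn p.1 p.2 (by simpa using hpP)
      have hax : 0 ≤ a - p.1 := by linarith
      have hge : p.2 ≤ p.2 * (1 + L p.1 p.2 * (a - p.1)) ^ 2 := by
        nlinarith [mul_nonneg hp2 (mul_nonneg hL0 hax),
          mul_nonneg hp2 (sq_nonneg (L p.1 p.2 * (a - p.1)))]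
      have := hray p hpP (p.2 * (1 + L p.1 p.2 * (a - p.1)) ^ 2 - p.2) (by linarith)
      simpa using this
    · have hbase : (p.1, (0:ℝ)) ∈ P := hseg p.1 ⟨le_of_lt hlt, hp1⟩
      have ht : 0 ≤ p.2 * (1 + L p.1 p.2 * (a - p.1)) ^ 2 := by positivity
      have := hray (p.1, 0) hbase _ ht
      simpa using this
  · -- P ⊆ image
    intro hq
    obtain ⟨r, z⟩ := q
    have hq1 : r ≤ 0 := (hsub hq).1
    have hq2 : 0 ≤ z := (hsub hq).2
    set h : ℝ → ℝ := fun y => y * (1 + L r y * (a - r)) ^ 2 with hh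
    have hhcont : Continuous h :=
      continuous_id.mul (((continuous_const.add ((hcont r).mul continuous_const))).pow 2)
    have key : (∃ y : ℝ, (r, y) ∈ P ∧ (r, y) ≠ ((0:ℝ), (0:ℝ)) ∧ h y = z) → (r, z) ∈
        (fun p : ℝ × ℝ => (p.1, p.2 *
          (1 + MvPolynomial.eval ![p.1, p.2] (∏ i, g i) * (a - p.1)) ^ 2)) ''
        (P \ {((0 : ℝ), (0 : ℝ))}) := by
      rintro ⟨y, hyP, hyne, hyz⟩
      refine ⟨(r, y), ⟨hyP, by simpa using hyne⟩, ?_⟩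
      simp only
      rw [hLev]
      exact Prod.ext rfl hyz
    apply key
    rcases le_or_gt r a with hra | har
    · -- case r ≤ a
      have hzS : z ∈ {y : ℝ | (r, y) ∈ P} := hq
      have hSeq := hfiber r ⟨z, hzS⟩
      set s : ℝ := sInf {y : ℝ | (r, y) ∈ P} with hs
      obtain ⟨i, hi⟩ := hvan r s hSeq
      have hsS : s ∈ {y : ℝ | (r, y) ∈ P} := by rw [hSeq]; exact le_refl s
      have hs0 : 0 ≤ s := (hsub hsS).2
      have hLs : L r s = 0 := by
        rw [hLdef]
        refine Finset.prod_eq_zero (Finset.mem_univ i) ?_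
        rw [← hev i r s]; exact hi
      have hhs : h s = s := by simp [hh, hLs]
      have hzs : s ≤ z := by rwa [hSeq] at hzS
      have hax : 0 ≤ a - r := by linarith
      have hhz : z ≤ h z := by
        have hLz := hLnn r z hzS
        simp only [hh]
        nlinarith [mul_nonneg hq2 (mul_nonneg hLz hax),
          mul_nonneg hq2 (sq_nonneg (L r z * (a - r)))]
      have hmemIcc : z ∈ Set.Icc (h s) (h z) := ⟨by rw [hhs]; exact hzs, hhz⟩
      obtain ⟨y, hyIcc, hyz⟩ := intermediate_value_Icc hzs hhcont.continuousOn hmemIcc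
      have hyS : y ∈ {y : ℝ | (r, y) ∈ P} := by rw [hSeq]; exact hyIcc.1
      refine ⟨y, hyS, ?_, hyz⟩
      intro hcon
      have : r = 0 := congrArg Prod.fst hcon
      linarith
    · -- case a < r ≤ 0
      obtain ⟨j, hj⟩ := hyg
      have hevj := hev j
      rw [hj] at hevj
      have hXj : ∀ x y : ℝ, Cc j + A j * x + B j * y = y := by
        intro x y
        have := hevj x y
        simpa using this.symm
      have hr0P : (r, (0:ℝ)) ∈ P := hseg r ⟨le_of_lt har, hq1⟩
      have hall : ∀ y : ℝ, 0 ≤ y → (r, y) ∈ P := by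
        intro y hy0
        have := hray (r, 0) hr0P y hy0
        simpa using this
      have hF0 : ∀ i, 0 ≤ Cc i + A i * r + B i * 0 := fun i => ((hmem (r, 0)).mp hr0P).1 i
      have hFpos1 : ∀ i, 0 < Cc i + A i * r + B i * 1 := by
        intro i
        rcases eq_or_lt_of_le (hBnn i) with hB0 | hBpos
        · exact hconstpos i hB0.symm r 1 har
        · have := hF0 i
          nlinarith
      set d : ℝ := ∏ i ∈ Finset.univ.erase j, (Cc i + A i * r + B i * 1) with hd
      have hdpos : 0 < d := Finset.prod_pos (fun i _ => hFpos1 i)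
      have hgrow : ∀ y : ℝ, 1 ≤ y → d * y ≤ L r y := by
        intro y hy1
        have hLsplit : L r y = (Cc j + A j * r + B j * y) *
            ∏ i ∈ Finset.univ.erase j, (Cc i + A i * r + B i * y) := by
          rw [hLdef]
          exact (Finset.mul_prod_erase Finset.univ _ (Finset.mem_univ j)).symm
        have hprodle : d ≤ ∏ i ∈ Finset.univ.erase j, (Cc i + A i * r + B i * y) := by
          rw [hd]
          apply Finset.prod_le_prod
          · intro i _; exact le_of_lt (hFpos1 i)
          · intro i _
            have := hBnn i
            nlinarith
        rw [hLsplit, hXj r y]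
        have hy0 : 0 ≤ y := le_trans zero_le_one hy1
        calc d * y = y * d := by ring
          _ ≤ y * ∏ i ∈ Finset.univ.erase j, (Cc i + A i * r + B i * y) :=
              mul_le_mul_of_nonneg_left hprodle hy0
      rcases lt_or_eq_of_le hq1 with hrneg | hr0
      · -- subcase r < 0
        set M : ℝ := max 1 (max z (2/(d*(r-a)))) with hM
        have hM1 : 1 ≤ M := le_max_left _ _
        have hMz : z ≤ M := le_trans (le_max_left _ _) (le_max_right _ _)
        have hM2 : 2/(d*(r-a)) ≤ M := le_trans (le_max_right _ _) (le_max_right _ _)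
        have hrapos : 0 < r - a := by linarith
        have hLM : 2/(r-a) ≤ L r M := by
          have h1 : d * (2/(d*(r-a))) ≤ d * M := mul_le_mul_of_nonneg_left hM2 (le_of_lt hdpos)
          have h2 : d * (2/(d*(r-a))) = 2/(r-a) := by
            rw [eq_div_iff (ne_of_gt hrapos)]
            field_simp
          have h3 := hgrow M hM1
          linarith
        have hsq : 1 + L r M * (a - r) ≤ -1 := by
          have he : (2/(r-a)) * (r - a) = 2 := div_mul_cancel₀ 2 (ne_of_gt hrapos)
          have h4 : (2/(r-a)) * (r - a) ≤ L r M * (r - a) :=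
            mul_le_mul_of_nonneg_right hLM (le_of_lt hrapos)
          linarith
        have hc2 : 1 ≤ (1 + L r M * (a - r)) ^ 2 := by nlinarith [hsq]
        have hhM : z ≤ h M := by
          simp only [hh]
          nlinarith [mul_nonneg (le_trans zero_le_one hM1)
            (by linarith : (0:ℝ) ≤ (1 + L r M * (a - r)) ^ 2 - 1)]
        have hh0 : h 0 = 0 := by simp [hh]
        obtain ⟨y, hyIcc, hyz⟩ := intermediate_value_Icc (le_trans zero_le_one hM1)
          hhcont.continuousOn ⟨by rw [hh0]; exact hq2, hhM⟩
        refine ⟨y, hall y hyIcc.1, ?_, hyz⟩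
        intro hcon
        have : r = 0 := congrArg Prod.fst hcon
        linarith
      · -- subcase r = 0
        subst hr0
        have hzero : L 0 0 = 0 := by
          have hfib : {y : ℝ | ((0:ℝ), y) ∈ P} = Set.Ici (0:ℝ) := by
            ext y
            constructor
            · intro hyP; exact (hsub hyP).2
            · intro hy0; exact haxis y hy0
          obtain ⟨i, hi⟩ := hvan 0 0 hfib
          rw [hLdef]
          refine Finset.prod_eq_zero (Finset.mem_univ i) ?_
          rw [← hev i 0 0]; exact hi
        have hanz : a ≠ 0 := ne_of_lt ha
        have htpos : 0 < -1/a := by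
          rw [div_pos_iff]; right; constructor <;> linarith
        set Y : ℝ := max 1 ((-1/a)/d) with hY
        have hY1 : 1 ≤ Y := le_max_left _ _
        have hLY : -1/a ≤ L 0 Y := by
          have h1 : d * ((-1/a)/d) ≤ d * Y :=
            mul_le_mul_of_nonneg_left (le_max_right _ _) (le_of_lt hdpos)
          have h2 : d * ((-1/a)/d) = -1/a := by
            field_simp
          have h3 := hgrow Y hY1
          linarith
        obtain ⟨y₀, hy₀Icc, hy₀x⟩ := intermediate_value_Icc (le_trans zero_le_one hY1)
          (hcont 0).continuousOn ⟨by rw [hzero]; exact le_of_lt htpos, hLY⟩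
        have hy₀ : L 0 y₀ = -1/a := hy₀x
        have hy₀pos : 0 < y₀ := by
          rcases eq_or_lt_of_le hy₀Icc.1 with h0 | h0
          · exfalso; rw [← h0, hzero] at hy₀; linarith
          · exact h0
        have hhy₀ : h y₀ = 0 := by
          simp only [hh, hy₀]
          have he : 1 + -1/a * (a - 0) = 0 := by field_simp; ring
          rw [he]
          ring
        set M : ℝ := max y₀ (max z (max 1 (2/(d*(-a))))) with hM
        have hMy₀ : y₀ ≤ M := le_max_left _ _
        have hMz : z ≤ M := le_trans (le_max_left _ _) (le_max_right _ _)
        have hM1 : 1 ≤ M := le_trans (le_max_left _ _) (le_trans (le_max_right _ _)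
          (le_max_right _ _))
        have hM2 : 2/(d*(-a)) ≤ M := le_trans (le_max_right _ _) (le_trans (le_max_right _ _)
          (le_max_right _ _))
        have hnapos : 0 < -a := by linarith
        have hLM : 2/(-a) ≤ L 0 M := by
          have h1 : d * (2/(d*(-a))) ≤ d * M := mul_le_mul_of_nonneg_left hM2 (le_of_lt hdpos)
          have h2 : d * (2/(d*(-a))) = 2/(-a) := by
            rw [eq_div_iff (by linarith : (-a : ℝ) ≠ 0)]
            field_simp
          have h3 := hgrow M hM1
          linarith
        have hsq : 1 + L 0 M * (a - 0) ≤ -1 := by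
          have he : (2/(-a)) * (-a) = 2 := div_mul_cancel₀ 2 (ne_of_gt hnapos)
          have h4 : (2/(-a)) * (-a) ≤ L 0 M * (-a) :=
            mul_le_mul_of_nonneg_right hLM (le_of_lt hnapos)
          linarith
        have hc2 : 1 ≤ (1 + L 0 M * (a - 0)) ^ 2 := by nlinarith [hsq]
        have hhM : z ≤ h M := by
          simp only [hh]
          nlinarith [mul_nonneg (le_trans zero_le_one hM1) (by linarith : (0:ℝ) ≤ (1 + L 0 M * (a - 0)) ^ 2 - 1)]
        obtain ⟨y, hyIcc, hyz⟩ := intermediate_value_Icc hMy₀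
          hhcont.continuousOn ⟨by rw [hhy₀]; exact hq2, hhM⟩
        have hypos : 0 < y := lt_of_lt_of_le hy₀pos hyIcc.1
        refine ⟨y, haxis y (le_of_lt hypos), ?_, hyz⟩
        intro hcon
        have : y = 0 := (Prod.ext_iff.mp hcon).2
        linarith
end
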